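/- For every c with 0 < c < 1, the entropy integral of the Marchenko–Pastur measure π_c equals h_c = c²/2; that is, ∫ x ln x dπ_c(x) = c²/2, where ln is the natural logarithm. -/

import Mathlib

/-!
Only the absolutely continuous part of `π_c` contributes, and on its support
`x · mpDensity c x = √(4c - (x-1-c)²) / (2π)`. The substitution `x = 1 + c - 2q cos θ`,
`q = √c`, turns the integral into `(2c/π) ∫₀^π sin²θ · log (1 - 2q cos θ + q²) dθ`.
Since `log (1 - 2q cos θ + q²) = -2 ∑ₙ qⁿ cos (nθ) / n` is the real part of
`-2 log (1 - q e^{iθ})`, integrating termwise against `sin²θ = (1 - cos 2θ)/2` leaves only the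
`n = 2` term, `π q² / 4`, so the integral is `(2c/π) · π c / 4 = c² / 2`.
-/

open MeasureTheory

/-- The density of the absolutely continuous part of the Marchenko–Pastur
distribution with parameter `c`: `√(4c - (x-1-c)²)/(2πx)` on the interval
`[1+c-2√c, 1+c+2√c]`, and `0` elsewhere. -/
noncomputable def mpDensity (c : ℝ) (x : ℝ) : ℝ :=
  if 1 + c - 2 * Real.sqrt c ≤ x ∧ x ≤ 1 + c + 2 * Real.sqrt c then
    Real.sqrt (4 * c - (x - 1 - c) ^ 2) / (2 * Real.pi * x)
  else 0

/-- The Marchenko–Pastur measure with parameter `c`: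
`π_c = max(1-c,0)·δ₀ + mpDensity c · Lebesgue`. -/
noncomputable def mpMeasure (c : ℝ) : Measure ℝ :=
  ENNReal.ofReal (max (1 - c) 0) • Measure.dirac 0 +
    volume.withDensity fun x => ENNReal.ofReal (mpDensity c x)

open Real

lemma integral_cos_int_mul (m : ℤ) :
    ∫ θ in (0:ℝ)..π, cos (m * θ) = if m = 0 then π else 0 := by
  split_ifs with hm
  · simp [hm]
  · rw [intervalIntegral.integral_comp_mul_left (fun x => cos x) (by exact_mod_cast hm),
      integral_cos]
    simp [sin_int_mul_pi]

lemma integral_sin_sq_mul_cos_nat_mul (n : ℕ) :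
    ∫ θ in (0:ℝ)..π, sin θ ^ 2 * cos (n * θ) =
      if n = 0 then π / 2 else if n = 2 then -(π / 4) else 0 := by
  have product_to_sum (θ : ℝ) : sin θ ^ 2 * cos (n * θ) =
      cos ((n : ℤ) * θ) / 2 - cos (((n + 2 : ℤ) : ℝ) * θ) / 4
        - cos (((n - 2 : ℤ) : ℝ) * θ) / 4 := by
    push_cast
    rw [add_mul, sub_mul, cos_add, cos_sub, cos_two_mul, cos_sq']
    ring
  simp_rw [product_to_sum]
  rw [intervalIntegral.integral_sub, intervalIntegral.integral_sub, intervalIntegral.integral_div,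
    intervalIntegral.integral_div, intervalIntegral.integral_div]
  all_goals try exact (by fun_prop : Continuous _).intervalIntegrable _ _
  simp only [integral_cos_int_mul]
  split_ifs <;> first | omega | ring

lemma hasSum_log_one_sub_two_mul_cos_add_sq {q : ℝ} (hq : |q| < 1) (θ : ℝ) :
    HasSum (fun n : ℕ => -2 * q ^ n * cos (n * θ) / n) (log (1 - 2 * q * cos θ + q ^ 2)) := by
  set z : ℂ := q * Complex.exp (θ * Complex.I)
  have hz : ‖z‖ < 1 := by simpa [z, Complex.norm_exp_ofReal_mul_I] using hq
  have re_pow_div (n : ℕ) : (z ^ n / n).re = q ^ n * cos (n * θ) / n := by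
    rw [show z ^ n / n = ((q ^ n / n : ℝ) : ℂ) * Complex.exp (((n * θ : ℝ)) * Complex.I) by
      simp only [z, mul_pow, ← Complex.exp_nat_mul, ← mul_assoc]; push_cast; ring]
    rw [Complex.re_ofReal_mul, Complex.exp_ofReal_mul_I_re]
    ring
  have normSq_one_sub : Complex.normSq (1 - z) = 1 - 2 * q * cos θ + q ^ 2 := by
    rw [Complex.normSq_apply]
    simp only [z, Complex.sub_re, Complex.sub_im, Complex.one_re, Complex.one_im,
      Complex.re_ofReal_mul, Complex.im_ofReal_mul, Complex.exp_ofReal_mul_I_re,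
      Complex.exp_ofReal_mul_I_im]
    linear_combination q ^ 2 * sin_sq_add_cos_sq θ
  have re_neg_log : (-Complex.log (1 - z)).re = -log (1 - 2 * q * cos θ + q ^ 2) / 2 := by
    rw [Complex.neg_re, Complex.log_re, ← normSq_one_sub, Complex.normSq_eq_norm_sq, log_pow]
    ring
  have h := Complex.hasSum_re (Complex.hasSum_taylorSeries_neg_log hz)
  simp only [re_pow_div, re_neg_log] at h
  rw [show log (1 - 2 * q * cos θ + q ^ 2) = -2 * (-log (1 - 2 * q * cos θ + q ^ 2) / 2) by ring]
  exact (h.mul_left (-2)).congr_fun fun n => by ring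

lemma integral_sin_sq_mul_log_one_sub_two_mul_cos_add_sq {q : ℝ} (hq : |q| < 1) :
    ∫ θ in (0:ℝ)..π, sin θ ^ 2 * log (1 - 2 * q * cos θ + q ^ 2) = π * q ^ 2 / 4 := by
  set F : ℕ → ℝ → ℝ := fun n θ => sin θ ^ 2 * (-2 * q ^ n * cos (n * θ) / n)
  have hF_bound (n : ℕ) (θ : ℝ) : ‖F n θ‖ ≤ 2 * |q| ^ n := by
    have hsin : sin θ ^ 2 ≤ 1 := sin_sq_le_one θ
    have hcos : |cos (n * θ)| ≤ 1 := abs_cos_le_one _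
    have hn : (n : ℝ)⁻¹ ≤ 1 := Nat.cast_inv_le_one n
    simp only [F, norm_mul, div_eq_mul_inv, norm_inv, norm_pow, norm_neg, Real.norm_eq_abs,
      abs_two, sq_abs, Nat.abs_cast]
    calc sin θ ^ 2 * (2 * |q| ^ n * |cos (n * θ)| * (n : ℝ)⁻¹)
        ≤ 1 * (2 * |q| ^ n * 1 * 1) := by gcongr
      _ = 2 * |q| ^ n := by ring
  have hF_integral (n : ℕ) :
      ∫ θ in (0:ℝ)..π, F n θ = if n = 2 then π * q ^ 2 / 4 else 0 := by
    have hF : F n = fun θ => -2 * q ^ n / n * (sin θ ^ 2 * cos (n * θ)) := by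
      ext θ; simp only [F]; ring
    rw [hF, intervalIntegral.integral_const_mul, integral_sin_sq_mul_cos_nat_mul]
    split_ifs <;> simp_all; ring
  have hsum : HasSum (fun n => ∫ θ in (0:ℝ)..π, F n θ)
      (∫ θ in (0:ℝ)..π, sin θ ^ 2 * log (1 - 2 * q * cos θ + q ^ 2)) :=
    intervalIntegral.hasSum_integral_of_dominated_convergence (fun n _ => 2 * |q| ^ n)
    (fun n => (by fun_prop : Continuous (F n)).aestronglyMeasurable)
    (fun n => ae_of_all _ fun θ _ => hF_bound n θ)
    (ae_of_all _ fun _ _ => (summable_geometric_of_lt_one (abs_nonneg q) hq).mul_left 2)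
    intervalIntegrable_const
    (ae_of_all _ fun θ _ => (hasSum_log_one_sub_two_mul_cos_add_sq hq θ).mul_left _)
  simp only [hF_integral] at hsum
  exact hsum.unique (hasSum_ite_eq 2 _)

lemma integral_log_mul_sqrt_four_mul_sub_sq {c : ℝ} (hc0 : 0 ≤ c) (hc1 : c < 1) :
    ∫ x in (1 + c - 2 * √c)..(1 + c + 2 * √c), log x * √(4 * c - (x - 1 - c) ^ 2) =
      π * c ^ 2 := by
  set q := √c
  have hq_sq : q ^ 2 = c := sq_sqrt hc0
  have hq : |q| < 1 := by
    rw [abs_of_nonneg (sqrt_nonneg c), sqrt_lt' one_pos]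
    linarith
  have hsubst := intervalIntegral.integral_deriv_smul_comp_of_deriv_nonneg
    (f := fun θ => 1 + c - 2 * q * cos θ) (f' := fun θ => 2 * q * sin θ)
    (g := fun x => log x * √(4 * c - (x - 1 - c) ^ 2)) (a := 0) (b := π) (by fun_prop)
    (fun θ _ => by simpa using ((hasDerivAt_cos θ).const_mul (2 * q)).const_sub (1 + c))
    (fun θ hθ => by
      rw [min_eq_left pi_pos.le, max_eq_right pi_pos.le] at hθ
      have := sin_nonneg_of_nonneg_of_le_pi hθ.1.le hθ.2.le
      positivity)
  simp only [cos_zero, cos_pi, mul_one, mul_neg, sub_neg_eq_add] at hsubst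
  have hintegrand : ∀ θ ∈ Set.uIcc 0 π, (2 * q * sin θ) •
      ((fun x => log x * √(4 * c - (x - 1 - c) ^ 2)) ∘ fun θ => 1 + c - 2 * q * cos θ) θ =
      4 * c * (sin θ ^ 2 * log (1 - 2 * q * cos θ + q ^ 2)) := by
    intro θ hθ
    rw [Set.uIcc_of_le pi_pos.le] at hθ
    have hsin : 0 ≤ sin θ := sin_nonneg_of_nonneg_of_le_pi hθ.1 hθ.2
    have hsqrt : √(4 * c - (1 + c - 2 * q * cos θ - 1 - c) ^ 2) = 2 * q * sin θ := by
      rw [← sqrt_sq (by positivity : 0 ≤ 2 * q * sin θ)]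
      congr 1
      linear_combination (-4) * hq_sq - 4 * q ^ 2 * sin_sq_add_cos_sq θ
    have hlog : 1 + c - 2 * q * cos θ = 1 - 2 * q * cos θ + q ^ 2 := by rw [hq_sq]; ring
    rw [smul_eq_mul, Function.comp_apply, hsqrt, hlog, ← hq_sq]
    ring
  rw [← hsubst, intervalIntegral.integral_congr hintegrand, intervalIntegral.integral_const_mul,
    integral_sin_sq_mul_log_one_sub_two_mul_cos_add_sq hq, hq_sq]
  ring

lemma mpDensity_nonneg (c x : ℝ) : 0 ≤ mpDensity c x := by
  unfold mpDensity
  split_ifs with hx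
  · rcases le_or_gt 0 x with hx0 | hx0
    · positivity
    · have : 4 * c - (x - 1 - c) ^ 2 ≤ 0 := by
        rcases le_or_gt 0 c with hc | hc
        · nlinarith [sq_sqrt hc, sq_nonneg (1 - √c)]
        · nlinarith
      simp [sqrt_eq_zero'.2 this]
  · exact le_rfl

lemma measurable_mpDensity (c : ℝ) : Measurable (mpDensity c) :=
  Measurable.ite measurableSet_Icc (by fun_prop) measurable_const

lemma integral_mpMeasure {c : ℝ} {f : ℝ → ℝ}
    (hf : Integrable (fun x => mpDensity c x * f x)) :
    ∫ x, f x ∂mpMeasure c = max (1 - c) 0 * f 0 + ∫ x, mpDensity c x * f x := by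
  have hdensity : Measurable fun x => ENNReal.ofReal (mpDensity c x) :=
    (measurable_mpDensity c).ennreal_ofReal
  have hdirac : Integrable f (Measure.dirac 0) := integrable_dirac enorm_lt_top
  rw [mpMeasure, integral_add_measure (hdirac.smul_measure ENNReal.ofReal_ne_top),
    integral_smul_measure, integral_dirac, integral_withDensity_eq_integral_toReal_smul hdensity
      (ae_of_all _ fun _ => ENNReal.ofReal_lt_top)]
  · simp only [ENNReal.toReal_ofReal (le_max_right _ _),
      ENNReal.toReal_ofReal (mpDensity_nonneg c _), smul_eq_mul]
  · rw [integrable_withDensity_iff hdensity (ae_of_all _ fun _ => ENNReal.ofReal_lt_top)]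
    simpa [ENNReal.toReal_ofReal, mpDensity_nonneg, mul_comm] using hf

lemma mpDensity_mul_mul_log_eq_indicator (c x : ℝ) :
    mpDensity c x * (x * log x) = (Set.Icc (1 + c - 2 * √c) (1 + c + 2 * √c)).indicator
      (fun x => log x * √(4 * c - (x - 1 - c) ^ 2) / (2 * π)) x := by
  unfold mpDensity
  split_ifs with hx
  · rw [Set.indicator_of_mem (s := Set.Icc _ _) hx]
    rcases eq_or_ne x 0 with rfl | hx0
    · simp
    · field_simp
  · rw [Set.indicator_of_notMem (s := Set.Icc _ _) hx, zero_mul]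

/-- For every `0 < c < 1`, the entropy integral of the
Marchenko–Pastur measure `π_c` equals `h_c = c²/2`. -/
theorem mpMeasure_entropy_integral_lt_one (c : ℝ) (hc0 : 0 < c) (hc1 : c < 1) :
    ∫ x, x * Real.log x ∂(mpMeasure c) = c ^ 2 / 2 := by
  have hab : 1 + c - 2 * √c ≤ 1 + c + 2 * √c := by linarith [sqrt_nonneg c]
  have hdensity : (fun x => mpDensity c x * (x * log x)) = _ :=
    funext (mpDensity_mul_mul_log_eq_indicator c)
  have hint : IntegrableOn (fun x => log x * √(4 * c - (x - 1 - c) ^ 2) / (2 * π))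
      (Set.Icc (1 + c - 2 * √c) (1 + c + 2 * √c)) :=
    (intervalIntegrable_iff_integrableOn_Icc_of_le hab).1
      ((intervalIntegral.intervalIntegrable_log'.mul_continuousOn (by fun_prop)).div_const _)
  rw [integral_mpMeasure (by rw [hdensity]; exact hint.integrable_indicator measurableSet_Icc),
    hdensity, integral_indicator measurableSet_Icc, integral_Icc_eq_integral_Ioc,
    ← intervalIntegral.integral_of_le hab, intervalIntegral.integral_div,
    integral_log_mul_sqrt_four_mul_sub_sq hc0.le hc1, zero_mul, mul_zero, zero_add]
  field_simp
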